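/- arXiv:2210.17427 — 5 statements merged into one kernel-verified Lean document; each statement's English description precedes it below -/
import Mathlib

section
/- Let p be real with 2 < p ≤ 3. There exists a constant C > 0 (depending only on p) such that for all real a, b ≥ 0 one has |(a+b)^p - a^p - b^p - p a^{p-1} b - p a b^{p-1}| ≤ C a^{p/2} b^{p/2}. -/
/-!
Assume `b ≤ a`. The Taylor remainder `R = (a + b)^p - a^p - p a^(p-1) b` is nonnegative by
convexity, and two applications of the tangent-line inequality for `t ↦ t^q` (with `q = p` and
`q = p - 1`) give `R ≤ p (p - 1) (a + b)^(p-2) b² ≤ 2^(p-2) p (p - 1) a^(p-2) b²`. Since `b ≤ a`,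
moving exponent from `b` to `a` only increases a monomial, so for `p ≤ 4` each of `a^(p-2) b²`,
`b^p` and `a b^(p-1)` is at most `a^(p/2) b^(p/2)`. The error term is `R - b^p - p a b^(p-1)`,
a difference of nonnegative quantities that are each bounded by a multiple of `a^(p/2) b^(p/2)`.
-/

open Real

lemma rpow_add_mul_sub_le_rpow {q x y : ℝ} (hq : 1 ≤ q) (hx : 0 ≤ x) (hy : 0 < y) :
    y ^ q + q * y ^ (q - 1) * (x - y) ≤ x ^ q := by
  have hbern := one_add_mul_self_le_rpow_one_add
    (by linarith [div_nonneg hx hy.le] : -1 ≤ x / y - 1) hq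
  rw [add_sub_cancel, div_rpow hx hy.le, le_div_iff₀ (rpow_pos_of_pos hy q)] at hbern
  calc y ^ q + q * y ^ (q - 1) * (x - y) = (1 + q * (x / y - 1)) * y ^ q := by
        rw [rpow_sub_one hy.ne']; field_simp
    _ ≤ x ^ q := hbern

lemma mul_rpow_sub_one_mul_le_rpow_add_sub_rpow {q a b : ℝ} (hq : 1 ≤ q) (ha : 0 < a) (hb : 0 ≤ b) :
    q * a ^ (q - 1) * b ≤ (a + b) ^ q - a ^ q := by
  have := rpow_add_mul_sub_le_rpow hq (by positivity : 0 ≤ a + b) ha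
  rw [add_sub_cancel_left] at this
  linarith

lemma rpow_add_sub_rpow_le_mul {q a b : ℝ} (hq : 1 ≤ q) (ha : 0 < a) (hb : 0 ≤ b) :
    (a + b) ^ q - a ^ q ≤ q * (a + b) ^ (q - 1) * b := by
  have := rpow_add_mul_sub_le_rpow hq ha.le (by positivity : 0 < a + b)
  rw [show a - (a + b) = -b by ring] at this
  linarith

lemma rpow_add_sub_rpow_sub_le {q a b : ℝ} (hq : 2 ≤ q) (ha : 0 < a) (hb : 0 ≤ b) :
    (a + b) ^ q - a ^ q - q * a ^ (q - 1) * b ≤ q * (q - 1) * (a + b) ^ (q - 2) * b ^ (2 : ℝ) := by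
  have h₁ := rpow_add_sub_rpow_le_mul (by linarith) ha hb (q := q)
  have h₂ := rpow_add_sub_rpow_le_mul (by linarith) ha hb (q := q - 1)
  rw [sub_sub, show q - (1 + 1) = q - 2 by ring] at h₂
  have h₃ := mul_le_mul_of_nonneg_left h₂ (by positivity : 0 ≤ q * b)
  rw [rpow_two]
  linarith

lemma rpow_mul_rpow_le_of_le {a b x y v : ℝ} (hb : 0 ≤ b) (hba : b ≤ a) (hx : 0 ≤ x)
    (hv : 0 ≤ v) (hvy : v ≤ y) :
    a ^ x * b ^ y ≤ a ^ (x + y - v) * b ^ v := by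
  have ha : 0 ≤ a := hb.trans hba
  calc a ^ x * b ^ y = a ^ x * b ^ (y - v) * b ^ v := by
        rw [mul_assoc, ← rpow_add_of_nonneg hb (by linarith) hv, sub_add_cancel]
    _ ≤ a ^ x * a ^ (y - v) * b ^ v := by gcongr
    _ = a ^ (x + y - v) * b ^ v := by
        rw [← rpow_add_of_nonneg ha hx (by linarith), add_sub_assoc]

lemma abs_rpow_add_sub_le_of_le {p a b : ℝ} (hp₂ : 2 ≤ p) (hp₄ : p ≤ 4) (hb : 0 ≤ b)
    (hba : b ≤ a) :
    |(a + b) ^ p - a ^ p - b ^ p - p * a ^ (p - 1) * b - p * a * b ^ (p - 1)| ≤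
      (2 ^ (p - 2) * p * (p - 1) + p + 1) * (a ^ (p / 2) * b ^ (p / 2)) := by
  rcases hb.eq_or_lt with rfl | hb
  · simp [zero_rpow (by linarith : p ≠ 0), zero_rpow (by linarith : p - 1 ≠ 0),
      zero_rpow (by linarith : p / 2 ≠ 0)]
  have ha : 0 < a := hb.trans_le hba
  have hpow_two_le : a ^ (p - 2) * b ^ (2 : ℝ) ≤ a ^ (p / 2) * b ^ (p / 2) := by
    have := rpow_mul_rpow_le_of_le hb.le hba (x := p - 2) (y := 2) (v := p / 2)
      (by linarith) (by linarith) (by linarith)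
    rwa [show p - 2 + 2 - p / 2 = p / 2 by ring] at this
  have hpow_le : b ^ p ≤ a ^ (p / 2) * b ^ (p / 2) := by
    have := rpow_mul_rpow_le_of_le hb.le hba (x := 0) (y := p) (v := p / 2)
      le_rfl (by linarith) (by linarith)
    rwa [rpow_zero, one_mul, zero_add, sub_half] at this
  have hmul_le : a * b ^ (p - 1) ≤ a ^ (p / 2) * b ^ (p / 2) := by
    have := rpow_mul_rpow_le_of_le hb.le hba (x := 1) (y := p - 1) (v := p / 2)
      zero_le_one (by linarith) (by linarith)
    rwa [rpow_one, show 1 + (p - 1) - p / 2 = p / 2 by ring] at this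
  set A := a ^ (p / 2) * b ^ (p / 2)
  have hc : 0 ≤ 2 ^ (p - 2) * p * (p - 1) := mul_nonneg (by positivity) (by linarith)
  have hR_nonneg := mul_rpow_sub_one_mul_le_rpow_add_sub_rpow (by linarith) ha hb.le (q := p)
  have hR_le : (a + b) ^ p - a ^ p - p * a ^ (p - 1) * b ≤ 2 ^ (p - 2) * p * (p - 1) * A := by
    have hsum_le : (a + b) ^ (p - 2) ≤ 2 ^ (p - 2) * a ^ (p - 2) := by
      rw [← mul_rpow zero_le_two ha.le]
      exact rpow_le_rpow (by positivity) (by linarith) (by linarith)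
    have hpp : 0 ≤ p * (p - 1) := mul_nonneg (by linarith) (by linarith)
    calc _ ≤ p * (p - 1) * (a + b) ^ (p - 2) * b ^ (2 : ℝ) := rpow_add_sub_rpow_sub_le hp₂ ha hb.le
      _ ≤ p * (p - 1) * (2 ^ (p - 2) * a ^ (p - 2)) * b ^ (2 : ℝ) := by gcongr
      _ = 2 ^ (p - 2) * p * (p - 1) * (a ^ (p - 2) * b ^ (2 : ℝ)) := by ring
      _ ≤ 2 ^ (p - 2) * p * (p - 1) * A := by gcongr
  have hpmul_le := mul_le_mul_of_nonneg_left hmul_le (by linarith : 0 ≤ p)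
  have : 0 ≤ b ^ p := by positivity
  have : 0 ≤ p * (a * b ^ (p - 1)) := mul_nonneg (by linarith) (by positivity)
  rw [abs_le]
  constructor <;> linarith

theorem stmt1 (p : ℝ) (hp1 : 2 < p) (hp2 : p ≤ 3) :
    ∃ C : ℝ, 0 < C ∧ ∀ a b : ℝ, 0 ≤ a → 0 ≤ b →
      |(a + b) ^ p - a ^ p - b ^ p - p * a ^ (p - 1) * b - p * a * b ^ (p - 1)| ≤
        C * (a ^ (p / 2) * b ^ (p / 2)) := by
  refine ⟨2 ^ (p - 2) * p * (p - 1) + p + 1, ?_, fun a b ha hb => ?_⟩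
  · have : 0 < 2 ^ (p - 2) * p * (p - 1) := mul_pos (by positivity) (by linarith)
    linarith
  rcases le_total b a with hba | hab
  · exact abs_rpow_add_sub_le_of_le hp1.le (by linarith) hb hba
  · calc _ = |(b + a) ^ p - b ^ p - a ^ p - p * b ^ (p - 1) * a - p * b * a ^ (p - 1)| := by
          rw [add_comm a b]; congr 1; ring
      _ ≤ _ := abs_rpow_add_sub_le_of_le hp1.le (by linarith) ha hab
      _ = _ := by ring
end

section
/- Let p > 3 be real. There exists a constant C > 0 (depending only on p) such that for all real a, b ≥ 0 one has |(a+b)^p - a^p - b^p - p a^{p-1} b - p a b^{p-1}| ≤ C (a^{p-2} b^2 + a^2 b^{p-2}). -/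
/-!
By symmetry we may assume `b ≤ a`. Applying the tangent-line inequality for the convex function
`t ^ q` (Bernoulli's inequality) at the exponents `p` and `p - 1` gives
`0 ≤ (a + b) ^ p - a ^ p - p a ^ (p - 1) b ≤ p (p - 1) b ^ 2 (a + b) ^ (p - 2) ≤ p (p - 1) 2 ^ (p - 2) a ^ (p - 2) b ^ 2`,
while `b ≤ a` and `p ≥ 3` bound the two remaining terms `b ^ p` and `p a b ^ (p - 1)` by
`(1 + p) a ^ (p - 2) b ^ 2`.
-/

open Real

lemma rpow_add_tangent_le_rpow {q u v : ℝ} (hq : 1 ≤ q) (hu : 0 ≤ u) (hv : 0 ≤ v) :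
    v ^ q + q * v ^ (q - 1) * (u - v) ≤ u ^ q := by
  rcases hv.eq_or_lt with rfl | hv
  · rcases hq.eq_or_lt with rfl | hq
    · simp
    · simp [zero_rpow (by linarith : q ≠ 0), zero_rpow (by linarith : q - 1 ≠ 0),
        rpow_nonneg hu]
  · have hbern := one_add_mul_self_le_rpow_one_add
      (by rw [le_sub_iff_add_le, neg_add_cancel]; positivity : -1 ≤ u / v - 1) hq
    rw [add_sub_cancel, div_rpow hu hv.le, le_div_iff₀ (rpow_pos_of_pos hv q)] at hbern
    calc v ^ q + q * v ^ (q - 1) * (u - v)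
        = (1 + q * (u / v - 1)) * v ^ q := by
          rw [rpow_sub_one hv.ne']; field_simp
      _ ≤ u ^ q := hbern

lemma rpow_le_rpow_mul_sq {x y s : ℝ} (hy : 0 ≤ y) (hyx : y ≤ x) (hs : 0 ≤ s) :
    y ^ (s + 2) ≤ x ^ s * y ^ 2 := by
  rw [rpow_add' hy (by linarith), rpow_two]
  gcongr

lemma rpow_add_sub_tangent_nonneg {q x y : ℝ} (hq : 1 ≤ q) (hx : 0 ≤ x) (hy : 0 ≤ y) :
    0 ≤ (x + y) ^ q - x ^ q - q * x ^ (q - 1) * y := by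
  have := rpow_add_tangent_le_rpow hq (add_nonneg hx hy) hx
  rw [add_sub_cancel_left] at this
  linarith

lemma rpow_add_sub_tangent_le {q x y : ℝ} (hq : 2 ≤ q) (hy : 0 ≤ y) (hyx : y ≤ x) :
    (x + y) ^ q - x ^ q - q * x ^ (q - 1) * y ≤
      q * (q - 1) * 2 ^ (q - 2) * (x ^ (q - 2) * y ^ 2) := by
  have hx : 0 ≤ x := hy.trans hyx
  have hxy : 0 ≤ x + y := add_nonneg hx hy
  have h1 := rpow_add_tangent_le_rpow (by linarith : 1 ≤ q) hx hxy
  have h2 := rpow_add_tangent_le_rpow (by linarith : 1 ≤ q - 1) hx hxy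
  rw [sub_add_cancel_left] at h1
  rw [show q - 1 - 1 = q - 2 by ring, sub_add_cancel_left] at h2
  have h3 : (x + y) ^ (q - 2) ≤ 2 ^ (q - 2) * x ^ (q - 2) := by
    rw [← mul_rpow zero_le_two hx]
    exact rpow_le_rpow hxy (by linarith) (by linarith)
  have hq0 : 0 ≤ q * (q - 1) := by nlinarith
  calc (x + y) ^ q - x ^ q - q * x ^ (q - 1) * y
      ≤ q * y * ((x + y) ^ (q - 1) - x ^ (q - 1)) := by nlinarith
    _ ≤ q * y * ((q - 1) * y * (x + y) ^ (q - 2)) := by gcongr; nlinarith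
    _ = q * (q - 1) * y ^ 2 * (x + y) ^ (q - 2) := by ring
    _ ≤ q * (q - 1) * y ^ 2 * (2 ^ (q - 2) * x ^ (q - 2)) := by gcongr
    _ = q * (q - 1) * 2 ^ (q - 2) * (x ^ (q - 2) * y ^ 2) := by ring

noncomputable def binomialRemainder (p a b : ℝ) : ℝ :=
  (a + b) ^ p - a ^ p - b ^ p - p * a ^ (p - 1) * b - p * a * b ^ (p - 1)

lemma binomialRemainder_comm (p a b : ℝ) : binomialRemainder p a b = binomialRemainder p b a := by
  unfold binomialRemainder; rw [add_comm a b]; ring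

lemma abs_binomialRemainder_le_of_le {p a b : ℝ} (hp : 3 ≤ p) (hb : 0 ≤ b) (hba : b ≤ a) :
    |binomialRemainder p a b| ≤ (p * (p - 1) * 2 ^ (p - 2) + 1 + p) * (a ^ (p - 2) * b ^ 2) := by
  have ha : 0 ≤ a := hb.trans hba
  have hbp : b ^ p ≤ a ^ (p - 2) * b ^ 2 := by
    simpa using rpow_le_rpow_mul_sq hb hba (by linarith : 0 ≤ p - 2)
  have habp : a * b ^ (p - 1) ≤ a ^ (p - 2) * b ^ 2 := by
    have h := rpow_le_rpow_mul_sq hb hba (by linarith : 0 ≤ p - 3)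
    rw [show p - 3 + 2 = p - 1 by ring] at h
    calc a * b ^ (p - 1) ≤ a * (a ^ (p - 3) * b ^ 2) := by gcongr
      _ = a ^ (p - 2) * b ^ 2 := by
        rw [← mul_assoc, ← rpow_one_add' ha (by linarith)]; ring_nf
  have hE0 := rpow_add_sub_tangent_nonneg (by linarith : 1 ≤ p) ha hb
  have hE := rpow_add_sub_tangent_le (by linarith : 2 ≤ p) hb hba
  have hF0 : 0 ≤ b ^ p + p * (a * b ^ (p - 1)) := by positivity
  calc |binomialRemainder p a b|
      = |((a + b) ^ p - a ^ p - p * a ^ (p - 1) * b) - (b ^ p + p * (a * b ^ (p - 1)))| := by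
        unfold binomialRemainder; congr 1; ring
    _ ≤ ((a + b) ^ p - a ^ p - p * a ^ (p - 1) * b) + (b ^ p + p * (a * b ^ (p - 1))) :=
        abs_le.2 ⟨by linarith, by linarith⟩
    _ ≤ _ := by linarith [mul_le_mul_of_nonneg_left habp (by linarith : 0 ≤ p)]

theorem stmt2 (p : ℝ) (hp : 3 < p) :
    ∃ C : ℝ, 0 < C ∧ ∀ a b : ℝ, 0 ≤ a → 0 ≤ b →
      |(a + b) ^ p - a ^ p - b ^ p - p * a ^ (p - 1) * b - p * a * b ^ (p - 1)| ≤
        C * (a ^ (p - 2) * b ^ 2 + a ^ 2 * b ^ (p - 2)) := by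
  have hC : 0 < p * (p - 1) * 2 ^ (p - 2) + 1 + p := by
    have : 0 < p * (p - 1) * 2 ^ (p - 2) := mul_pos (by nlinarith) (by positivity)
    linarith
  set C := p * (p - 1) * 2 ^ (p - 2) + 1 + p
  refine ⟨C, hC, fun a b ha hb => ?_⟩
  have hab : 0 ≤ a ^ (p - 2) * b ^ 2 := by positivity
  have hba : 0 ≤ a ^ 2 * b ^ (p - 2) := by positivity
  change |binomialRemainder p a b| ≤ _
  rcases le_total b a with h | h
  · calc |binomialRemainder p a b| ≤ C * (a ^ (p - 2) * b ^ 2) :=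
          abs_binomialRemainder_le_of_le hp.le hb h
      _ ≤ _ := by gcongr; linarith
  · calc |binomialRemainder p a b| ≤ C * (b ^ (p - 2) * a ^ 2) := by
          rw [binomialRemainder_comm]; exact abs_binomialRemainder_le_of_le hp.le ha h
      _ ≤ _ := by rw [mul_comm (b ^ _)]; gcongr; linarith
end

section
/- Let m > 1 be real and set m* = min{m, 2}. There exists a constant C > 0 (depending only on m) such that for all real numbers a and b one has | |a+b|^m - |a|^m - m |a|^{m-2} a b | ≤ C ( |a|^{m-m*} |b|^{m*} + |b|^m ). -/
/-!
Dividing by `|a| ^ m` reduces the inequality to the one-variable bound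
`| |1 + s| ^ m - 1 - m s | ≤ C (|s| ^ m* + |s| ^ m)` with `s = b / a`. For `|s| ≤ 1/2` the left side
is a first-order Taylor remainder of `t ↦ t ^ m` on `[1/2, 3/2]`, hence `O(s ^ 2)`, and `s ^ 2 ≤ |s| ^ m*`
there; for `|s| ≥ 1/2` every term on the left is `O(|s| ^ m)`.
-/

open Set

lemma Real.rpow_le_max_of_mem_Icc {x y t : ℝ} (hx : 0 < x) (ht : t ∈ Icc x y) (p : ℝ) :
    t ^ p ≤ max (x ^ p) (y ^ p) := by
  rcases le_total 0 p with hp | hp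
  · exact le_max_of_le_right (Real.rpow_le_rpow (hx.le.trans ht.1) ht.2 hp)
  · exact le_max_of_le_left (Real.rpow_le_rpow_of_nonpos hx ht.1 hp)

lemma Real.abs_rpow_sub_rpow_le {c d x y : ℝ} (hc : 0 < c) (hx : x ∈ Icc c d) (hy : y ∈ Icc c d)
    (p : ℝ) : |y ^ p - x ^ p| ≤ |p| * max (c ^ (p - 1)) (d ^ (p - 1)) * |y - x| := by
  have hpos : ∀ t ∈ Icc c d, 0 < t := fun t ht => hc.trans_le ht.1
  refine (convex_Icc c d).norm_image_sub_le_of_norm_hasDerivWithin_le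
    (f := fun t => t ^ p) (f' := fun t => p * t ^ (p - 1)) (fun t ht => ?_) (fun t ht => ?_) hx hy
  · exact (Real.hasDerivAt_rpow_const (Or.inl (hpos t ht).ne')).hasDerivWithinAt
  · rw [Real.norm_eq_abs, abs_mul, abs_of_pos (Real.rpow_pos_of_pos (hpos t ht) _)]
    exact mul_le_mul_of_nonneg_left (Real.rpow_le_max_of_mem_Icc hc ht _) (abs_nonneg p)

lemma abs_sub_sub_mul_le_of_hasDerivAt {f f' : ℝ → ℝ} {x y L : ℝ}
    (hf : ∀ t ∈ uIcc x y, HasDerivAt f (f' t) t)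
    (hf' : ∀ t ∈ uIcc x y, |f' t - f' x| ≤ L * |t - x|) (hL : 0 ≤ L) :
    |f y - f x - f' x * (y - x)| ≤ L * (y - x) ^ 2 := by
  have key := (convex_uIcc x y).norm_image_sub_le_of_norm_hasDerivWithin_le
    (f := fun t => f t - f' x * t) (C := L * |y - x|)
    (fun t ht => ((hf t ht).sub ((hasDerivAt_id t).const_mul (f' x))).hasDerivWithinAt.congr_deriv
      (by simp))
    (fun t ht => (hf' t ht).trans (mul_le_mul_of_nonneg_left (abs_sub_left_of_mem_uIcc ht) hL))
    left_mem_uIcc right_mem_uIcc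
  simp only [Real.norm_eq_abs] at key
  calc |f y - f x - f' x * (y - x)| = |f y - f' x * y - (f x - f' x * x)| := by ring_nf
    _ ≤ L * |y - x| * |y - x| := key
    _ = L * (y - x) ^ 2 := by rw [mul_assoc, abs_mul_abs_self, sq]

lemma abs_one_add_rpow_sub_le_of_abs_le_half (m : ℝ) {s : ℝ} (hs : |s| ≤ 1 / 2) :
    |(1 + s) ^ m - 1 - m * s| ≤
      |m| * |m - 1| * max ((1 / 2) ^ (m - 2)) ((3 / 2) ^ (m - 2)) * s ^ 2 := by
  have hseg : uIcc 1 (1 + s) ⊆ Icc (1 / 2) (3 / 2) := by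
    rw [abs_le] at hs
    exact uIcc_subset_Icc ⟨by norm_num, by norm_num⟩ ⟨by linarith, by linarith⟩
  have h := abs_sub_sub_mul_le_of_hasDerivAt (f := fun t => t ^ m) (f' := fun t => m * t ^ (m - 1))
    (x := 1) (y := 1 + s) (L := |m| * |m - 1| * max ((1 / 2) ^ (m - 2)) ((3 / 2) ^ (m - 2)))
    (fun t ht => Real.hasDerivAt_rpow_const (Or.inl (by linarith [(hseg ht).1])))
    (fun t ht => by
      have := Real.abs_rpow_sub_rpow_le (by norm_num) (hseg left_mem_uIcc) (hseg ht) (m - 1)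
      rw [show m - 1 - 1 = m - 2 by ring] at this
      rw [← mul_sub, abs_mul, mul_assoc, mul_assoc]
      exact mul_le_mul_of_nonneg_left (by rwa [← mul_assoc]) (abs_nonneg m))
    (by positivity)
  simpa using h

lemma abs_abs_one_add_rpow_sub_le_of_half_le {m s : ℝ} (hm : 1 ≤ m) (hs : 1 / 2 ≤ |s|) :
    |(|1 + s| ^ m - 1 - m * s)| ≤ (2 + m) * 3 ^ m * |s| ^ m := by
  set x := 3 * |s|
  have hx : 1 ≤ x := by linarith
  have hxm : x ≤ x ^ m := Real.self_le_rpow_of_one_le hx hm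
  have h1s : |1 + s| ^ m ≤ x ^ m :=
    Real.rpow_le_rpow (abs_nonneg _) ((abs_add_le 1 s).trans (by norm_num; linarith)) (by linarith)
  calc |(|1 + s| ^ m - 1 - m * s)| ≤ |1 + s| ^ m + 1 + m * |s| := by
        rw [abs_le]
        have := Real.rpow_nonneg (abs_nonneg (1 + s)) m
        constructor <;> nlinarith [le_abs_self s, neg_abs_le s]
    _ ≤ x ^ m + x ^ m + m * x ^ m := by
        gcongr <;> linarith
    _ = (2 + m) * 3 ^ m * |s| ^ m := by
        rw [Real.mul_rpow (by norm_num) (abs_nonneg s)]; ring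

lemma exists_abs_abs_one_add_rpow_sub_le {m p : ℝ} (hm : 1 ≤ m) (hp : p ≤ 2) :
    ∃ C, 1 ≤ C ∧ ∀ s : ℝ, |(|1 + s| ^ m - 1 - m * s)| ≤ C * (|s| ^ p + |s| ^ m) := by
  set K := |m| * |m - 1| * max ((1 / 2 : ℝ) ^ (m - 2)) ((3 / 2) ^ (m - 2))
  have hK : 0 ≤ K := by positivity
  have h3m : 1 ≤ (2 + m) * 3 ^ m := by
    nlinarith [Real.one_le_rpow (by norm_num : (1 : ℝ) ≤ 3) (by linarith : 0 ≤ m)]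
  refine ⟨K + (2 + m) * 3 ^ m, by linarith, fun s => ?_⟩
  have hsp := Real.rpow_nonneg (abs_nonneg s) p
  have hsm := Real.rpow_nonneg (abs_nonneg s) m
  rcases le_total |s| (1 / 2) with hs | hs
  · have hsq : s ^ 2 ≤ |s| ^ p := by
      rcases eq_or_ne s 0 with rfl | hs0
      · simpa using hsp
      rw [← sq_abs, ← Real.rpow_natCast]
      exact Real.rpow_le_rpow_of_exponent_ge (abs_pos.mpr hs0) (by linarith) (by exact_mod_cast hp)
    have hpos : 0 < 1 + s := by linarith [neg_abs_le s]
    rw [abs_of_pos hpos]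
    calc |(1 + s) ^ m - 1 - m * s| ≤ K * s ^ 2 := abs_one_add_rpow_sub_le_of_abs_le_half m hs
      _ ≤ (K + (2 + m) * 3 ^ m) * (|s| ^ p + |s| ^ m) := by
        gcongr <;> linarith
  · calc |(|1 + s| ^ m - 1 - m * s)| ≤ (2 + m) * 3 ^ m * |s| ^ m :=
          abs_abs_one_add_rpow_sub_le_of_half_le hm hs
      _ ≤ (K + (2 + m) * 3 ^ m) * (|s| ^ p + |s| ^ m) := by
        gcongr <;> linarith

lemma abs_add_mul_rpow_sub_eq {a : ℝ} (ha : a ≠ 0) (m s : ℝ) :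
    |a + a * s| ^ m - |a| ^ m - m * |a| ^ (m - 2) * a * (a * s) =
      |a| ^ m * (|1 + s| ^ m - 1 - m * s) := by
  have ha' : 0 < |a| := abs_pos.mpr ha
  have hsq : |a| ^ (m - 2) * a * a = |a| ^ m := by
    rw [mul_assoc, ← abs_mul_abs_self, Real.rpow_sub ha', Real.rpow_two]
    field_simp
  rw [show a + a * s = a * (1 + s) by ring, abs_mul, Real.mul_rpow (abs_nonneg _) (abs_nonneg _)]
  linear_combination (-(m * s)) * hsq

lemma abs_rpow_mul_abs_mul_rpow_add_eq {a : ℝ} (ha : a ≠ 0) (m p s : ℝ) :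
    |a| ^ (m - p) * |a * s| ^ p + |a * s| ^ m = |a| ^ m * (|s| ^ p + |s| ^ m) := by
  have ha' : 0 < |a| := abs_pos.mpr ha
  rw [abs_mul, Real.mul_rpow ha'.le (abs_nonneg _), Real.mul_rpow ha'.le (abs_nonneg _),
    Real.rpow_sub ha']
  field_simp

theorem stmt3 (m : ℝ) (hm : 1 < m) :
    ∃ C : ℝ, 0 < C ∧ ∀ a b : ℝ,
      |(|a + b| ^ m - |a| ^ m - m * |a| ^ (m - 2) * a * b)| ≤
        C * (|a| ^ (m - min m 2) * |b| ^ (min m 2) + |b| ^ m) := by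
  obtain ⟨C, hC1, hC⟩ := exists_abs_abs_one_add_rpow_sub_le hm.le (min_le_right m 2)
  refine ⟨C, by linarith, fun a b => ?_⟩
  rcases eq_or_ne a 0 with rfl | ha
  · have hbm := Real.rpow_nonneg (abs_nonneg b) m
    have hb2 := Real.rpow_nonneg (abs_nonneg b) (min m 2)
    have h0 := Real.rpow_nonneg (le_refl (0 : ℝ)) (m - min m 2)
    simp only [zero_add, abs_zero, Real.zero_rpow (by linarith : m ≠ 0), mul_zero, zero_mul,
      sub_zero, abs_of_nonneg hbm]
    nlinarith [mul_nonneg (by linarith : 0 ≤ C) (mul_nonneg h0 hb2)]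
  obtain ⟨s, rfl⟩ : ∃ s, b = a * s := ⟨b / a, by field_simp⟩
  rw [abs_add_mul_rpow_sub_eq ha, abs_rpow_mul_abs_mul_rpow_add_eq ha, abs_mul,
    abs_of_nonneg (Real.rpow_nonneg (abs_nonneg a) m), mul_left_comm]
  exact mul_le_mul_of_nonneg_left (hC s) (Real.rpow_nonneg (abs_nonneg a) m)
end

section
/- Let m > 1 and let w : ℝ → [0, ∞) be measurable with 0 < ∫_ℝ w < ∞ and with ∫_ℝ |s|^{m-1} w(s) ds < ∞, and suppose w is even (w(-s) = w(s)). Define F(t) = ∫_ℝ |s + t|^{m-2}(s + t) w(s) ds for t ∈ ℝ (with |r|^{m-2} r := 0 at r = 0). Then F(t) = 0 if and only if t = 0. -/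
/-! The integrand is `g (s + t) * w s` with `g r = |r| ^ (m - 2) * r`, which is odd and strictly
increasing for `m > 1`. Since `w ≥ 0` has positive mass, `t ↦ ∫ g (s + t) w(s) ds` is strictly
increasing, and it vanishes at `t = 0` because `g * w` is odd when `w` is even. -/

open MeasureTheory

noncomputable def signedRpow (m r : ℝ) : ℝ := |r| ^ (m - 2) * r

lemma signedRpow_neg (m r : ℝ) : signedRpow m (-r) = -signedRpow m r := by
  simp [signedRpow]

lemma signedRpow_of_pos (m : ℝ) {r : ℝ} (hr : 0 < r) : signedRpow m r = r ^ (m - 1) := by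
  rw [signedRpow, abs_of_pos hr, show m - 1 = (m - 2) + 1 by ring, Real.rpow_add_one hr.ne']

lemma abs_signedRpow {m : ℝ} (hm : m ≠ 1) (r : ℝ) : |signedRpow m r| = |r| ^ (m - 1) := by
  rcases eq_or_ne r 0 with rfl | hr
  · simp [signedRpow, Real.zero_rpow (sub_ne_zero.2 hm)]
  · rw [← signedRpow_of_pos m (abs_pos.2 hr), signedRpow, signedRpow, abs_mul, abs_abs,
      abs_of_nonneg (Real.rpow_nonneg (abs_nonneg r) _)]

lemma measurable_signedRpow (m : ℝ) : Measurable (signedRpow m) := by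
  unfold signedRpow; fun_prop

lemma strictMono_signedRpow {m : ℝ} (hm : 1 < m) : StrictMono (signedRpow m) := by
  refine strictMono_of_odd_strictMonoOn_nonneg (signedRpow_neg m) fun a ha b _ hab => ?_
  have hb : 0 < b := lt_of_le_of_lt ha hab
  rw [signedRpow_of_pos m hb]
  rcases (Set.mem_Ici.1 ha).eq_or_lt with rfl | ha
  · simpa [signedRpow] using Real.rpow_pos_of_pos hb _
  · rw [signedRpow_of_pos m ha]
    exact Real.rpow_lt_rpow ha.le hab (by linarith)

lemma abs_add_rpow_le {p : ℝ} (hp : 0 ≤ p) (a b : ℝ) :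
    |a + b| ^ p ≤ 2 ^ p * (|a| ^ p + |b| ^ p) := by
  have hmax : |a + b| ≤ 2 * max |a| |b| := by
    linarith [abs_add_le a b, le_max_left |a| |b|, le_max_right |a| |b|]
  calc |a + b| ^ p ≤ (2 * max |a| |b|) ^ p := Real.rpow_le_rpow (abs_nonneg _) hmax hp
    _ = 2 ^ p * max (|a| ^ p) (|b| ^ p) := by
      rw [Real.mul_rpow zero_le_two (le_max_of_le_left (abs_nonneg a)),
        (Real.monotoneOn_rpow_Ici_of_exponent_nonneg hp).map_max (abs_nonneg a) (abs_nonneg b)]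
    _ ≤ 2 ^ p * (|a| ^ p + |b| ^ p) := by
      gcongr
      exact max_le_add_of_nonneg (by positivity) (by positivity)

lemma integrable_signedRpow_add_mul {m : ℝ} (hm : 1 < m) {w : ℝ → ℝ} (hw_nonneg : ∀ s, 0 ≤ w s)
    (hw_int : Integrable w) (hw_mom : Integrable fun s => |s| ^ (m - 1) * w s) (t : ℝ) :
    Integrable fun s => signedRpow m (s + t) * w s := by
  refine Integrable.mono' ((hw_mom.add (hw_int.const_mul (|t| ^ (m - 1)))).const_mul (2 ^ (m - 1)))
    (((measurable_signedRpow m).comp (measurable_add_const t)).aestronglyMeasurable.mul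
      hw_int.aestronglyMeasurable) (Filter.Eventually.of_forall fun s => ?_)
  rw [Pi.add_apply, Real.norm_eq_abs, abs_mul, abs_signedRpow hm.ne', abs_of_nonneg (hw_nonneg s),
    ← add_mul, ← mul_assoc]
  exact mul_le_mul_of_nonneg_right (abs_add_rpow_le (by linarith) s t) (hw_nonneg s)

lemma integral_mul_lt_integral_mul {α : Type*} [MeasurableSpace α] {μ : Measure α}
    {f g w : α → ℝ} (hfg : ∀ x, f x < g x) (hw : 0 ≤ w) (hw_pos : 0 < ∫ x, w x ∂μ)
    (hf : Integrable (fun x => f x * w x) μ) (hg : Integrable (fun x => g x * w x) μ) :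
    ∫ x, f x * w x ∂μ < ∫ x, g x * w x ∂μ := by
  have hsupport : Function.support (fun x => g x * w x - f x * w x) = Function.support w := by
    ext x
    simp [← sub_mul, sub_eq_zero, (hfg x).ne']
  rw [← sub_pos, ← integral_sub hg hf,
    integral_pos_iff_support_of_nonneg (f := fun x => g x * w x - f x * w x)
      (fun x => show 0 ≤ g x * w x - f x * w x by
        rw [← sub_mul]; exact mul_nonneg (sub_nonneg.2 (hfg x).le) (hw x)) (hg.sub hf),
    -- `w` is integrable: otherwise its integral would be the junk value `0`
    hsupport, ← integral_pos_iff_support_of_nonneg hw (.of_integral_ne_zero hw_pos.ne')]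
  exact hw_pos

lemma integral_eq_zero_of_odd {G : Type*} [MeasurableSpace G] [AddGroup G] [MeasurableNeg G]
    {μ : Measure G} [μ.IsNegInvariant] {f : G → ℝ} (hf : ∀ x, f (-x) = -f x) :
    ∫ x, f x ∂μ = 0 := by
  have h := integral_neg_eq_self f μ
  simp only [hf, integral_neg] at h
  linarith

lemma strictMono_integral_comp_add_mul {g w : ℝ → ℝ} (hg : StrictMono g) (hw : 0 ≤ w)
    (hw_pos : 0 < ∫ s, w s) (hint : ∀ t, Integrable fun s => g (s + t) * w s) :
    StrictMono fun t => ∫ s, g (s + t) * w s := fun _ _ h12 =>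
  integral_mul_lt_integral_mul (fun s => hg ((add_lt_add_iff_left s).2 h12)) hw hw_pos
    (hint _) (hint _)

theorem stmt7_general (m : ℝ) (hm : 1 < m) (w : ℝ → ℝ)
    (hw_nonneg : ∀ s, 0 ≤ w s)
    (hw_int : Integrable w) (hw_pos : 0 < ∫ s, w s)
    (hw_mom : Integrable (fun s => |s| ^ (m - 1) * w s))
    (hw_even : ∀ s, w (-s) = w s) (t : ℝ) :
    (∫ s, |s + t| ^ (m - 2) * (s + t) * w s) = 0 ↔ t = 0 := by
  have hF : StrictMono fun u => ∫ s, signedRpow m (s + u) * w s :=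
    strictMono_integral_comp_add_mul (strictMono_signedRpow hm) hw_nonneg hw_pos
      (integrable_signedRpow_add_mul hm hw_nonneg hw_int hw_mom)
  have hF0 : ∫ s, signedRpow m (s + 0) * w s = 0 := by
    simp only [add_zero]
    exact integral_eq_zero_of_odd fun s => by rw [signedRpow_neg, hw_even, neg_mul]
  exact hF.injective.eq_iff' hF0

theorem stmt7 (m : ℝ) (hm : 1 < m) (w : ℝ → ℝ)
    (hw_meas : Measurable w) (hw_nonneg : ∀ s, 0 ≤ w s)
    (hw_int : Integrable w) (hw_pos : 0 < ∫ s, w s)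
    (hw_mom : Integrable (fun s => |s| ^ (m - 1) * w s))
    (hw_even : ∀ s, w (-s) = w s) (t : ℝ) :
    (∫ s, |s + t| ^ (m - 2) * (s + t) * w s) = 0 ↔ t = 0 :=
  stmt7_general m hm w hw_nonneg hw_int hw_pos hw_mom hw_even t
end

section
/- Let A₀, A₁, A₂, u : ℝ² → ℝ be C² functions satisfying ∂₁A₀ = A₂ u², ∂₂A₀ = -A₁ u², and ∂₁A₁ + ∂₂A₂ = 0. Then u · (A₁ ∂₁u + A₂ ∂₂u) = 0 everywhere on ℝ². In particular, on the open set where u ≠ 0, one has A₁ ∂₁u + A₂ ∂₂u = 0. -/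
/-- Partial derivative in the `k`-th coordinate direction in `ℝ²`
(`pd 0` is `∂₁`, `pd 1` is `∂₂`). -/
noncomputable def pd (k : Fin 2) (f : EuclideanSpace ℝ (Fin 2) → ℝ)
    (x : EuclideanSpace ℝ (Fin 2)) : ℝ :=
  fderiv ℝ f x (EuclideanSpace.single k 1)

/-!
Since `A₀` is `C²`, its mixed partials agree: `∂₂(A₂ u²) = ∂₁(-A₁ u²)`. Expanding both sides by
the product rule and cancelling `u² (∂₁A₁ + ∂₂A₂) = 0` leaves `2u (A₁ ∂₁u + A₂ ∂₂u) = 0`.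
-/

theorem fderiv_fderiv_apply_comm {E F : Type*} [NormedAddCommGroup E] [NormedSpace ℝ E]
    [NormedAddCommGroup F] [NormedSpace ℝ F] {f : E → F} (hf : ContDiff ℝ 2 f) (x v w : E) :
    fderiv ℝ (fun y => fderiv ℝ f y v) x w = fderiv ℝ (fun y => fderiv ℝ f y w) x v := by
  have hdf : DifferentiableAt ℝ (fderiv ℝ f) x :=
    ((hf.fderiv_right (m := 1) le_rfl).differentiable one_ne_zero).differentiableAt
  rw [fderiv_clm_apply hdf (differentiableAt_const _), fderiv_clm_apply hdf (differentiableAt_const _)]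
  simpa using hf.contDiffAt.isSymmSndFDerivAt (by simp) w v

section PartialDerivatives

variable {f g : EuclideanSpace ℝ (Fin 2) → ℝ} {x : EuclideanSpace ℝ (Fin 2)}

theorem pd_pd_comm (hf : ContDiff ℝ 2 f) (i j : Fin 2) (x : EuclideanSpace ℝ (Fin 2)) :
    pd i (pd j f) x = pd j (pd i f) x :=
  fderiv_fderiv_apply_comm hf x _ _

theorem pd_neg (k : Fin 2) : pd k (fun y => -f y) x = -pd k f x := by
  simp [pd, fderiv_fun_neg]

theorem pd_mul_sq (hf : DifferentiableAt ℝ f x) (hg : DifferentiableAt ℝ g x) (k : Fin 2) :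
    pd k (fun y => f y * g y ^ 2) x = g x ^ 2 * pd k f x + 2 * g x * pd k g x * f x := by
  unfold pd
  rw [fderiv_fun_mul hf (hg.fun_pow 2), fderiv_fun_pow 2 hg]
  simp only [Nat.add_one_sub_one, pow_one, nsmul_eq_mul, Nat.cast_ofNat, add_apply,
    smul_apply, smul_eq_mul]
  ring

end PartialDerivatives

theorem stmt12 (A₀ A₁ A₂ u : EuclideanSpace ℝ (Fin 2) → ℝ)
    (hA₀ : ContDiff ℝ 2 A₀) (hA₁ : ContDiff ℝ 2 A₁) (hA₂ : ContDiff ℝ 2 A₂)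
    (hu : ContDiff ℝ 2 u)
    (h1 : ∀ x, pd 0 A₀ x = A₂ x * u x ^ 2)
    (h2 : ∀ x, pd 1 A₀ x = -(A₁ x * u x ^ 2))
    (h3 : ∀ x, pd 0 A₁ x + pd 1 A₂ x = 0) :
    (∀ x, u x * (A₁ x * pd 0 u x + A₂ x * pd 1 u x) = 0) ∧
      ∀ x, u x ≠ 0 → A₁ x * pd 0 u x + A₂ x * pd 1 u x = 0 := by
  have key : ∀ x, u x * (A₁ x * pd 0 u x + A₂ x * pd 1 u x) = 0 := by
    intro x
    have hu' := hu.differentiable two_ne_zero x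
    have hmixed := pd_pd_comm hA₀ 1 0 x
    rw [funext h1, funext h2, pd_neg,
      pd_mul_sq (hA₂.differentiable two_ne_zero x) hu',
      pd_mul_sq (hA₁.differentiable two_ne_zero x) hu'] at hmixed
    linear_combination (hmixed - u x ^ 2 * h3 x) / 2
  exact ⟨key, fun x hx => (mul_eq_zero.mp (key x)).resolve_left hx⟩
end
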